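/- arXiv:0710.0080 — 2 statements merged into one kernel-verified Lean document; each statement's English description precedes it below -/
import Mathlib

section
/- For every x ∈ X, the open ball B_x = {y ∈ X : d^φ(y,x) < 1/(8(1+d(m,x)))} in (X, d^φ) satisfies: for all y, z ∈ B_x, d^φ(y,z) = d(y,z). -/
/-- δ^φ(x,y) = min{d(x,y), 1/(1+d(m,x)) + φ(x,y) + 1/(1+d(m,y))}. -/
noncomputable def deltaPhi {X : Type*} [MetricSpace X] (m : X) (φ : X → X → ℝ) (x y : X) : ℝ :=
  min (dist x y) (1 / (1 + dist m x) + φ x y + 1 / (1 + dist m y))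

/-- d^φ(x,y): infimum over finite chains x = x₀, ..., xₙ = y of Σ δ^φ(x_{i-1}, x_i). -/
noncomputable def dPhi {X : Type*} [MetricSpace X] (m : X) (φ : X → X → ℝ) (x y : X) : ℝ :=
  sInf { r : ℝ | ∃ (n : ℕ) (f : ℕ → X), 1 ≤ n ∧ f 0 = x ∧ f n = y ∧
    r = ∑ i ∈ Finset.range n, deltaPhi m φ (f i) (f (i + 1)) }

/-! A chain whose δ^φ-length is shorter than `1/(2(1+d(m,x₀)))` never leaves the `d`-ball of that
radius around its start `x₀`, where `1/(1+d(m,·))` stays above `1/(2(1+d(m,x₀)))`; so no link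
can use the shortcut through `φ`, and the chain is at least as long as its `d`-length. This gives
`min (d a b) (1/(2(1+d(m,a)))) ≤ d^φ a b`, and, applied to reversed chains, the same bound with
`m`-distance measured from `b`. Inside `B_x` all `d`-distances are below `1/(4(1+d(m,x)))`, so the
minimum is always `d`. -/

open Finset

section

variable {X : Type*} [MetricSpace X]

lemma one_div_two_mul_one_add_dist_le {m a b : X}
    (h : dist a b ≤ 1 / (2 * (1 + dist m a))) :
    1 / (2 * (1 + dist m a)) ≤ 1 / (1 + dist m b) := by
  set c := 1 + dist m a
  have hc : 1 ≤ c := le_add_of_nonneg_right dist_nonneg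
  have hhalf : 1 / (2 * c) ≤ c := by
    rw [div_le_iff₀ (by positivity)]
    nlinarith
  have hmb : 1 + dist m b ≤ 2 * c := by linarith [dist_triangle m a b]
  exact one_div_le_one_div_of_le (by positivity) hmb

lemma min_dist_le_sum_chain (m : X) {δ : X → X → ℝ} (hδ₀ : ∀ a b, 0 ≤ δ a b)
    (hδ : ∀ a b, min (dist a b) (1 / (1 + dist m a)) ≤ δ a b) (f : ℕ → X) (n : ℕ) :
    min (dist (f 0) (f n)) (1 / (2 * (1 + dist m (f 0)))) ≤
      ∑ i ∈ range n, δ (f i) (f (i + 1)) := by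
  induction n with
  | zero => simp
  | succ n ih =>
    rw [sum_range_succ]
    set S := ∑ i ∈ range n, δ (f i) (f (i + 1))
    rcases le_or_gt (1 / (2 * (1 + dist m (f 0)))) S with hfar | hnear
    · exact (min_le_right _ _).trans (le_add_of_le_of_nonneg hfar (hδ₀ _ _))
    have hdist : dist (f 0) (f n) ≤ S := by
      rcases min_le_iff.mp ih with h | h
      · exact h
      · exact absurd h hnear.not_ge
    rcases min_le_iff.mp (hδ (f n) (f (n + 1))) with hlink | hshortcut
    · calc min (dist (f 0) (f (n + 1))) _ ≤ dist (f 0) (f (n + 1)) := min_le_left _ _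
        _ ≤ dist (f 0) (f n) + dist (f n) (f (n + 1)) := dist_triangle _ _ _
        _ ≤ S + δ (f n) (f (n + 1)) := add_le_add hdist hlink
    · have hS : 0 ≤ S := dist_nonneg.trans hdist
      calc min (dist (f 0) (f (n + 1))) _ ≤ 1 / (2 * (1 + dist m (f 0))) := min_le_right _ _
        _ ≤ 1 / (1 + dist m (f n)) := one_div_two_mul_one_add_dist_le (hdist.trans hnear.le)
        _ ≤ S + δ (f n) (f (n + 1)) := by linarith

section deltaPhi

variable (m : X) {φ : X → X → ℝ}

lemma deltaPhi_le_dist (a b : X) : deltaPhi m φ a b ≤ dist a b := min_le_left _ _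

variable (hφ : ∀ x y, 0 ≤ φ x y)
include hφ

lemma deltaPhi_nonneg (a b : X) : 0 ≤ deltaPhi m φ a b :=
  le_min dist_nonneg (by have := hφ a b; positivity)

lemma min_dist_le_deltaPhi_left (a b : X) :
    min (dist a b) (1 / (1 + dist m a)) ≤ deltaPhi m φ a b := by
  refine min_le_min le_rfl ?_
  have := hφ a b
  have : 0 ≤ 1 / (1 + dist m b) := by positivity
  linarith

lemma min_dist_le_deltaPhi_right (a b : X) :
    min (dist a b) (1 / (1 + dist m b)) ≤ deltaPhi m φ a b := by
  refine min_le_min le_rfl ?_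
  have := hφ a b
  have : 0 ≤ 1 / (1 + dist m a) := by positivity
  linarith

end deltaPhi

section dPhi

variable {m : X} {φ : X → X → ℝ}

lemma le_dPhi_of_forall_chain {a b : X} {r : ℝ}
    (h : ∀ (n : ℕ) (f : ℕ → X), 1 ≤ n → f 0 = a → f n = b →
      r ≤ ∑ i ∈ range n, deltaPhi m φ (f i) (f (i + 1))) :
    r ≤ dPhi m φ a b := by
  refine le_csInf ⟨_, 1, fun i => if i = 0 then a else b, le_rfl, rfl, rfl, rfl⟩ ?_
  rintro _ ⟨n, f, hn, hf₀, hfn, rfl⟩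
  exact h n f hn hf₀ hfn

variable (hφ : ∀ x y, 0 ≤ φ x y)
include hφ

lemma dPhi_le_dist (a b : X) : dPhi m φ a b ≤ dist a b := by
  have hbdd : BddBelow {r : ℝ | ∃ (n : ℕ) (f : ℕ → X), 1 ≤ n ∧ f 0 = a ∧ f n = b ∧
      r = ∑ i ∈ range n, deltaPhi m φ (f i) (f (i + 1))} := by
    refine ⟨0, ?_⟩
    rintro _ ⟨n, f, -, -, -, rfl⟩
    exact sum_nonneg fun i _ => deltaPhi_nonneg m hφ _ _
  refine (csInf_le hbdd ⟨1, fun i => if i = 0 then a else b, le_rfl, rfl, rfl, ?_⟩).trans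
    (deltaPhi_le_dist (φ := φ) m a b)
  simp

lemma min_dist_le_dPhi_left (a b : X) :
    min (dist a b) (1 / (2 * (1 + dist m a))) ≤ dPhi m φ a b :=
  le_dPhi_of_forall_chain fun n f _ hf₀ hfn => by
    simpa only [hf₀, hfn] using
      min_dist_le_sum_chain m (deltaPhi_nonneg m hφ) (min_dist_le_deltaPhi_left m hφ) f n

lemma min_dist_le_dPhi_right (a b : X) :
    min (dist a b) (1 / (2 * (1 + dist m b))) ≤ dPhi m φ a b := by
  refine le_dPhi_of_forall_chain fun n f _ hf₀ hfn => ?_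
  have hrev := min_dist_le_sum_chain m (δ := fun u v => deltaPhi m φ v u)
    (fun u v => deltaPhi_nonneg m hφ v u)
    (fun u v => by simpa only [dist_comm u v] using min_dist_le_deltaPhi_right m hφ v u)
    (fun i => f (n - i)) n
  rw [← sum_range_reflect] at hrev
  simp only [Nat.sub_zero, Nat.sub_self, hf₀, hfn, dist_comm b a] at hrev
  refine hrev.trans_eq (sum_congr rfl fun i hi => ?_)
  have := mem_range.mp hi
  rw [show n - (n - 1 - i + 1) = i by omega, show n - (n - 1 - i) = i + 1 by omega]

lemma dPhi_eq_dist_of_dist_lt {a b : X} (h : dist a b < 1 / (2 * (1 + dist m a))) :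
    dPhi m φ a b = dist a b :=
  le_antisymm (dPhi_le_dist hφ a b) (min_eq_left h.le ▸ min_dist_le_dPhi_left hφ a b)

lemma dist_le_dPhi_of_dPhi_lt {a b : X} (h : dPhi m φ a b < 1 / (2 * (1 + dist m b))) :
    dist a b ≤ dPhi m φ a b :=
  (min_le_iff.mp (min_dist_le_dPhi_right hφ a b)).resolve_right h.not_ge

end dPhi

end

theorem stmt6_general {X : Type*} [MetricSpace X] (m : X) (φ : X → X → ℝ)
    (hφ : ∀ x y, 0 ≤ φ x y)
    (x : X) :
    ∀ y z, dPhi m φ y x < 1 / (8 * (1 + dist m x)) →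
      dPhi m φ z x < 1 / (8 * (1 + dist m x)) →
      dPhi m φ y z = dist y z := by
  intro y z hy hz
  set c := 1 + dist m x
  have hc : 0 < c := by positivity
  have h82 : 1 / (8 * c) ≤ 1 / (2 * c) := one_div_le_one_div_of_le (by positivity) (by linarith)
  have hyx : dist y x < 1 / (8 * c) := (dist_le_dPhi_of_dPhi_lt hφ (hy.trans_le h82)).trans_lt hy
  have hzx : dist z x < 1 / (8 * c) := (dist_le_dPhi_of_dPhi_lt hφ (hz.trans_le h82)).trans_lt hz
  have hyz : dist y z < 1 / (4 * c) := by
    have : 1 / (8 * c) + 1 / (8 * c) = 1 / (4 * c) := by field_simp; norm_num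
    linarith [dist_triangle_right y z x]
  have hmy : 1 / (2 * c) ≤ 1 / (1 + dist m y) :=
    one_div_two_mul_one_add_dist_le (by rw [dist_comm]; linarith)
  refine dPhi_eq_dist_of_dist_lt hφ (hyz.trans_le ?_)
  calc 1 / (4 * c) = 1 / (2 * c) / 2 := by field_simp; norm_num
    _ ≤ 1 / (1 + dist m y) / 2 := by gcongr
    _ = 1 / (2 * (1 + dist m y)) := by field_simp

theorem stmt6 {X : Type*} [MetricSpace X] (m : X) (φ : X → X → ℝ)
    (hφ : ∀ x y, 0 ≤ φ x y) (hsym : ∀ x y, φ x y = φ y x)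
    (x : X) :
    ∀ y z, dPhi m φ y x < 1 / (8 * (1 + dist m x)) →
      dPhi m φ z x < 1 / (8 * (1 + dist m x)) →
      dPhi m φ y z = dist y z :=
  stmt6_general m φ hφ x
end

section
/- Let x, y ∈ ℝˢ with |x| ≥ 1 and |y| ≥ 1, lying on rays L_{x'} and L_{y'} respectively (x', y' unit vectors). For any finite chain x = x₀, x₁, ..., xₘ = y with |xᵢ| < 1 for 1 ≤ i ≤ m−1, we have Σᵢ₌₁ᵐ δ^ψ(x_{i-1}, xᵢ) ≥ d_E(L_{x'}, L_{y'}). -/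
/-- aₘ = 1 + 1/2 + ⋯ + 1/m. -/
noncomputable def harm (m : ℕ) : ℝ := ∑ k ∈ Finset.range m, (1 : ℝ) / (k + 1)

-- The function φ for the standard compactification of ℝˢ:
-- φ(x,y) = 0 if y = (a_q/a_p) x for some p,q ≥ 1; φ(x,y) = (1/aₘ)|x−y| if x,y
-- lie on the sphere Sₘ of radius aₘ (note ‖x‖ = aₘ there); |x−y| otherwise.
open Classical in
noncomputable def phiStd (s : ℕ) (x y : EuclideanSpace ℝ (Fin s)) : ℝ :=
  if ∃ p q : ℕ, 1 ≤ p ∧ 1 ≤ q ∧ y = (harm q / harm p) • x then 0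
  else if ∃ m : ℕ, 1 ≤ m ∧ ‖x‖ = harm m ∧ ‖y‖ = harm m then (1 / ‖x‖) * ‖x - y‖
  else ‖x - y‖
-- The first standard basis vector a₁ = (1,0,…,0) of ℝˢ.
noncomputable def e1 (s : ℕ) : EuclideanSpace ℝ (Fin s) :=
  if h : 0 < s then EuclideanSpace.single (⟨0, h⟩ : Fin s) 1 else 0

-- The direction of the bent ray L_x (bending construction with parameter δ):
-- a₁ if ∠(x,a₁) ≤ δ; −a₁ if ∠(x,−a₁) ≤ δ; otherwise the unit vector in
-- span{a₁, x}, on the same side of the a₁-axis as x, making angle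
-- θ = (π/(π−2δ))(∠(x,a₁) − δ) with a₁.
open Classical in
noncomputable def rayDir (s : ℕ) (δ : ℝ) (x : EuclideanSpace ℝ (Fin s)) :
    EuclideanSpace ℝ (Fin s) :=
  if InnerProductGeometry.angle x (e1 s) ≤ δ then e1 s
  else if InnerProductGeometry.angle x (-(e1 s)) ≤ δ then -(e1 s)
  else
    Real.cos ((Real.pi / (Real.pi - 2 * δ)) * (InnerProductGeometry.angle x (e1 s) - δ)) • e1 s
      + Real.sin ((Real.pi / (Real.pi - 2 * δ)) * (InnerProductGeometry.angle x (e1 s) - δ)) •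
        (‖x - (inner ℝ x (e1 s) : ℝ) • e1 s‖⁻¹ • (x - (inner ℝ x (e1 s) : ℝ) • e1 s))

-- The ray L_x starting at the unit vector x, from the bending construction.
def ray (s : ℕ) (δ : ℝ) (x : EuclideanSpace ℝ (Fin s)) : Set (EuclideanSpace ℝ (Fin s)) :=
  { y | ∃ t : ℝ, 0 ≤ t ∧ y = x + t • rayDir s δ x }

-- d_E(A,B) = inf{|a−b| : a ∈ A, b ∈ B}.
noncomputable def setDist {E : Type*} [MetricSpace E] (A B : Set E) : ℝ :=
  sInf { r : ℝ | ∃ a ∈ A, ∃ b ∈ B, r = dist a b }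

-- The function ψ for the bent-ray compactification: ψ(x,y) = 0 if x and y lie
-- on a common ray of L (each on some sphere Sₚ, S_q); ψ(x,y) is the Euclidean
-- distance between the unit base points of the rays through x and y if
-- x, y ∈ Sₘ (i.e. d_E(h_{m,1}(x), h_{m,1}(y))); and ψ(x,y) = d_E(x,y) otherwise.
open Classical in
noncomputable def psiF (s : ℕ) (δ : ℝ) (x y : EuclideanSpace ℝ (Fin s)) : ℝ :=
  if ∃ x', ‖x'‖ = 1 ∧ x ∈ ray s δ x' ∧ y ∈ ray s δ x' ∧
      ∃ p q : ℕ, 1 ≤ p ∧ 1 ≤ q ∧ ‖x‖ = harm p ∧ ‖y‖ = harm q then 0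
  else if h : (∃ m : ℕ, 1 ≤ m ∧ ‖x‖ = harm m ∧ ‖y‖ = harm m) ∧
      (∃ x', ‖x'‖ = 1 ∧ x ∈ ray s δ x') ∧ (∃ y', ‖y'‖ = 1 ∧ y ∈ ray s δ y') then
    ‖h.2.1.choose - h.2.2.choose‖
  else ‖x - y‖

/-!
A link of the chain with an endpoint in the open unit ball has ψ equal to the Euclidean
distance, so for chains of two or more links δ^ψ dominates the Euclidean length and the triangle
inequality gives `d_E(L_{x'}, L_{y'}) ≤ |x - y| ≤ Σ δ^ψ`. For a single link it suffices that
`ψ(x, y) ≥ d_E(L_{x'}, L_{y'})`, which follows from the disjointness of the rays of `L`: each point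
lies on exactly one ray, so the base points chosen by ψ are `x'` and `y'`.

Disjointness is a planar statement. In the coordinates `(⟪z, a₁⟫, |z - ⟪z, a₁⟫ a₁|)` the ray from a
unit vector at angle `α` to `a₁` starts at `(cos α, sin α)` and leaves in direction `θ(α)`, where
`θ` is monotone with values in `[0, π]` and `|θ(α) - α| ≤ δπ/(π - 2δ) < π/2` (this is where
`δ < π/4` enters). Crossing the equation of a common point of two rays `α < β` with both
directions forces `θ(α) - (α+β)/2 ≤ -π/2` and `θ(β) - (α+β)/2 ≥ π/2`, hence `θ(α) = 0` and
`θ(β) = π`, and two opposite horizontal rays starting on different sides of the vertical axis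
cannot meet. Rays from the same angle meet only if their bases coincide, since the component
orthogonal to `a₁` only gets scaled along a ray.
-/

open Real InnerProductGeometry
open scoped RealInnerProductSpace

lemma le_neg_pi_div_two_of_cos_nonpos {x : ℝ} (hcos : cos x ≤ 0) (hx : x < π / 2) :
    x ≤ -(π / 2) := by
  by_contra! h
  exact (cos_pos_of_mem_Ioo ⟨h, hx⟩).not_ge hcos

lemma pi_div_two_le_of_cos_nonpos {x : ℝ} (hcos : cos x ≤ 0) (hx : -(π / 2) < x) :
    π / 2 ≤ x := by
  by_contra! h
  exact (cos_pos_of_mem_Ioo ⟨hx, h⟩).not_ge hcos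

lemma planar_rays_disjoint {α β θ₁ θ₂ K t r : ℝ} (hK : K < π / 2) (hαβ : α < β)
    (hθ₁ : 0 ≤ θ₁) (hθ : θ₁ ≤ θ₂) (hθ₂ : θ₂ ≤ π) (hα : |θ₁ - α| ≤ K) (hβ : |θ₂ - β| ≤ K)
    (ht : 0 ≤ t) (hr : 0 ≤ r)
    (hx : cos α + t * cos θ₁ = cos β + r * cos θ₂)
    (hy : sin α + t * sin θ₁ = sin β + r * sin θ₂) : False := by
  rw [abs_le] at hα hβ
  obtain ⟨A, D, rfl, rfl⟩ : ∃ A D, α = A - D ∧ β = A + D :=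
    ⟨(α + β) / 2, (β - α) / 2, by ring, by ring⟩
  have hsD : 0 < sin D := sin_pos_of_pos_of_lt_pi (by linarith) (by linarith)
  have hsθ : 0 ≤ sin (θ₂ - θ₁) := sin_nonneg_of_nonneg_of_le_pi (by linarith) (by linarith)
  rw [cos_sub, cos_add] at hx
  rw [sin_sub, sin_add] at hy
  -- the common point crossed with each of the two directions
  have hr' : r * sin (θ₂ - θ₁) = -(2 * sin D * cos (θ₁ - A)) := by
    rw [sin_sub, cos_sub]
    linear_combination sin θ₁ * hx - cos θ₁ * hy
  have ht' : t * sin (θ₂ - θ₁) = -(2 * sin D * cos (θ₂ - A)) := by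
    rw [sin_sub, cos_sub]
    linear_combination sin θ₂ * hx - cos θ₂ * hy
  have h₁ : θ₁ - A ≤ -(π / 2) :=
    le_neg_pi_div_two_of_cos_nonpos (by nlinarith [mul_nonneg hr hsθ]) (by linarith)
  have h₂ : π / 2 ≤ θ₂ - A :=
    pi_div_two_le_of_cos_nonpos (by nlinarith [mul_nonneg ht hsθ]) (by linarith)
  obtain ⟨rfl, rfl⟩ : θ₁ = 0 ∧ θ₂ = π := ⟨by linarith, by linarith⟩
  have hcα : 0 < cos (A - D) := cos_pos_of_mem_Ioo ⟨by linarith, by linarith⟩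
  have hcβ : cos (A + D) < 0 := cos_neg_of_pi_div_two_lt_of_lt (by linarith) (by linarith)
  rw [cos_sub, cos_add, cos_zero, cos_pi] at *
  linarith

-- The angle between `rayDir s δ x` and `a₁` as a function of `∠(x, a₁)`; the clamping to `[0, π]`
-- accounts for the two cases in which the ray runs along `±a₁`.
noncomputable def bendAngle (δ α : ℝ) : ℝ := max 0 (min π (π / (π - 2 * δ) * (α - δ)))

section BendAngle

variable {δ : ℝ}

lemma bendAngle_nonneg (α : ℝ) : 0 ≤ bendAngle δ α := le_max_left _ _

lemma bendAngle_le_pi (α : ℝ) : bendAngle δ α ≤ π := max_le pi_pos.le (min_le_left _ _)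

lemma bendAngle_mono (hδ : δ < π / 2) : Monotone (bendAngle δ) := by
  have : 0 ≤ π / (π - 2 * δ) := div_nonneg pi_pos.le (by linarith)
  intro α β hαβ
  unfold bendAngle
  gcongr

lemma bendAngle_of_le (hδ : δ < π / 2) {α : ℝ} (hα : α ≤ δ) :
    bendAngle δ α = 0 := by
  have : 0 ≤ π / (π - 2 * δ) := div_nonneg pi_pos.le (by linarith)
  exact max_eq_left ((min_le_right _ _).trans (mul_nonpos_of_nonneg_of_nonpos this (by linarith)))

lemma bendAngle_of_ge (hδ : δ < π / 2) {α : ℝ} (hα : π - δ ≤ α) : bendAngle δ α = π := by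
  have hden : 0 < π - 2 * δ := by linarith
  have : π ≤ π / (π - 2 * δ) * (α - δ) := by
    rw [div_mul_eq_mul_div, le_div_iff₀ hden]
    nlinarith [pi_pos]
  rw [bendAngle, min_eq_left this, max_eq_right pi_pos.le]

lemma bendAngle_of_mem_Ioo (hδ : δ < π / 2) {α : ℝ} (hα : α ∈ Set.Ioo δ (π - δ)) :
    bendAngle δ α = π / (π - 2 * δ) * (α - δ) := by
  have hden : 0 < π - 2 * δ := by linarith
  have h0 : 0 ≤ π / (π - 2 * δ) * (α - δ) := mul_nonneg (by positivity) (by linarith [hα.1])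
  have hπ : π / (π - 2 * δ) * (α - δ) ≤ π := by
    rw [div_mul_eq_mul_div, div_le_iff₀ hden]
    nlinarith [pi_pos, hα.2]
  rw [bendAngle, min_eq_right hπ, max_eq_right h0]

-- Clamping to `[0, π]` is 1-Lipschitz and fixes `α`, so only the affine part has to be estimated.
lemma abs_bendAngle_sub_le (hδ0 : 0 ≤ δ) (hδ : δ < π / 2) {α : ℝ} (hα : α ∈ Set.Icc 0 π) :
    |bendAngle δ α - α| ≤ δ * π / (π - 2 * δ) := by
  have hden : 0 < π - 2 * δ := by linarith
  have hclamp : max 0 (min π α) = α := by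
    rw [min_eq_right hα.2, max_eq_right hα.1]
  calc |bendAngle δ α - α|
      = |max (min π (π / (π - 2 * δ) * (α - δ))) 0 - max (min π α) 0| := by
        rw [max_comm (min π α), hclamp, bendAngle, max_comm]
    _ ≤ |π / (π - 2 * δ) * (α - δ) - α| := by
        refine (abs_max_sub_max_le_abs _ _ _).trans ?_
        simpa using abs_min_sub_min_le_max π (π / (π - 2 * δ) * (α - δ)) π α
    _ = δ * |2 * α - π| / (π - 2 * δ) := by
        rw [show π / (π - 2 * δ) * (α - δ) - α = δ * (2 * α - π) / (π - 2 * δ) by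
          field_simp; ring, abs_div, abs_mul, abs_of_nonneg hδ0, abs_of_pos hden]
    _ ≤ δ * π / (π - 2 * δ) := by
        gcongr
        exact abs_le.mpr ⟨by linarith [hα.1], by linarith [hα.2]⟩

lemma bendAngle_rays_disjoint (hδ0 : 0 ≤ δ) (hδ : δ < π / 4) {α β t r : ℝ}
    (hα : α ∈ Set.Icc 0 π) (hβ : β ∈ Set.Icc 0 π) (hαβ : α < β) (ht : 0 ≤ t) (hr : 0 ≤ r)
    (hx : cos α + t * cos (bendAngle δ α) = cos β + r * cos (bendAngle δ β))
    (hy : sin α + t * sin (bendAngle δ α) = sin β + r * sin (bendAngle δ β)) : False := by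
  have hδ' : δ < π / 2 := by linarith [pi_pos]
  have hK : δ * π / (π - 2 * δ) < π / 2 := by
    rw [div_lt_iff₀ (by linarith)]
    nlinarith [pi_pos]
  exact planar_rays_disjoint hK hαβ (bendAngle_nonneg α) (bendAngle_mono hδ' hαβ.le)
    (bendAngle_le_pi β) (abs_bendAngle_sub_le hδ0 hδ' hα) (abs_bendAngle_sub_le hδ0 hδ' hβ)
    ht hr hx hy

end BendAngle

noncomputable def rejection {E : Type*} [NormedAddCommGroup E] [InnerProductSpace ℝ E]
    (e u : E) : E :=
  u - ⟪u, e⟫ • e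

section Rejection

variable {E : Type*} [NormedAddCommGroup E] [InnerProductSpace ℝ E] {e u : E}

lemma rejection_add_inner_smul (e u : E) : rejection e u + ⟪u, e⟫ • e = u :=
  sub_add_cancel _ _

lemma inner_rejection_left (he : ‖e‖ = 1) : ⟪rejection e u, e⟫ = 0 := by
  rw [rejection, inner_sub_left, real_inner_smul_left, real_inner_self_eq_norm_sq, he]
  ring

lemma inner_eq_cos_angle (he : ‖e‖ = 1) (hu : ‖u‖ = 1) : ⟪u, e⟫ = cos (angle u e) := by
  simpa [he, hu] using (cos_angle_mul_norm_mul_norm u e).symm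

lemma norm_rejection (he : ‖e‖ = 1) (hu : ‖u‖ = 1) : ‖rejection e u‖ = sin (angle u e) := by
  have hsq : ‖rejection e u‖ ^ 2 = sin (angle u e) ^ 2 := by
    rw [rejection, norm_sub_sq_real, real_inner_smul_right, norm_smul, he, hu,
      inner_eq_cos_angle he hu, Real.norm_eq_abs, mul_one, sq_abs, sin_sq]
    ring
  exact (pow_left_inj₀ (norm_nonneg _) (sin_nonneg_of_nonneg_of_le_pi (angle_nonneg _ _)
    (angle_le_pi _ _)) two_ne_zero).mp hsq

lemma eq_of_rejection_sameRay {v : E} (hi : ⟪u, e⟫ = ⟪v, e⟫)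
    (hn : ‖rejection e u‖ = ‖rejection e v‖) (hray : SameRay ℝ (rejection e u) (rejection e v)) :
    u = v := by
  rw [← rejection_add_inner_smul e u, ← rejection_add_inner_smul e v, hray.eq_of_norm_eq hn, hi]

end Rejection

section Rays

variable {s : ℕ} {δ : ℝ}

lemma norm_e1 (hs : 0 < s) : ‖e1 s‖ = 1 := by
  simp [e1, hs]

lemma mem_ray_self (u : EuclideanSpace ℝ (Fin s)) : u ∈ ray s δ u :=
  ⟨0, le_rfl, by simp⟩

lemma exists_rayDir_eq (hs : 0 < s) (hδ0 : 0 ≤ δ) (hδ : δ < π / 2) {u : EuclideanSpace ℝ (Fin s)}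
    (hu : ‖u‖ = 1) :
    ∃ μ : ℝ, 0 ≤ μ ∧ μ * sin (angle u (e1 s)) = sin (bendAngle δ (angle u (e1 s))) ∧
      rayDir s δ u = cos (bendAngle δ (angle u (e1 s))) • e1 s + μ • rejection (e1 s) u := by
  set α := angle u (e1 s)
  have hneg : angle u (-e1 s) = π - α := angle_neg_right u (e1 s)
  by_cases h₁ : α ≤ δ
  · refine ⟨0, le_rfl, ?_, ?_⟩
    · simp [bendAngle_of_le hδ h₁]
    · rw [rayDir, if_pos h₁]
      simp [bendAngle_of_le hδ h₁]
  by_cases h₂ : π - δ ≤ α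
  · refine ⟨0, le_rfl, ?_, ?_⟩
    · simp [bendAngle_of_ge hδ h₂]
    · have : angle u (-e1 s) ≤ δ := by rw [hneg]; linarith
      rw [rayDir, if_neg h₁, if_pos this]
      simp [bendAngle_of_ge hδ h₂]
  rw [not_le] at h₁ h₂
  have hθ := bendAngle_of_mem_Ioo hδ ⟨h₁, h₂⟩
  have hsin : 0 < sin α := sin_pos_of_pos_of_lt_pi (by linarith) (by linarith)
  have hrej : ‖rejection (e1 s) u‖ = sin α := norm_rejection (norm_e1 hs) hu
  refine ⟨sin (bendAngle δ α) / sin α, div_nonneg (sin_nonneg_of_nonneg_of_le_pi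
    (bendAngle_nonneg _) (bendAngle_le_pi _)) hsin.le, div_mul_cancel₀ _ hsin.ne', ?_⟩
  have : ¬ angle u (-e1 s) ≤ δ := by rw [hneg]; linarith
  rw [rayDir, if_neg h₁.not_ge, if_neg this, ← hθ, div_eq_mul_inv, mul_smul, ← hrej]
  rfl

lemma exists_coords_of_mem_ray (hs : 0 < s) (hδ0 : 0 ≤ δ) (hδ : δ < π / 2)
    {u z : EuclideanSpace ℝ (Fin s)} (hu : ‖u‖ = 1) (hz : z ∈ ray s δ u) :
    ∃ t c : ℝ, 0 ≤ t ∧ 0 < c ∧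
      ⟪z, e1 s⟫ = cos (angle u (e1 s)) + t * cos (bendAngle δ (angle u (e1 s))) ∧
      ‖rejection (e1 s) z‖ = sin (angle u (e1 s)) + t * sin (bendAngle δ (angle u (e1 s))) ∧
      rejection (e1 s) z = c • rejection (e1 s) u := by
  obtain ⟨t, ht, rfl⟩ := hz
  obtain ⟨μ, hμ, hμsin, hdir⟩ := exists_rayDir_eq hs hδ0 hδ hu
  have he := norm_e1 hs
  have hee : ⟪e1 s, e1 s⟫ = 1 := by rw [real_inner_self_eq_norm_sq, he, one_pow]
  have hinner : ⟪u + t • rayDir s δ u, e1 s⟫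
      = cos (angle u (e1 s)) + t * cos (bendAngle δ (angle u (e1 s))) := by
    rw [hdir, inner_add_left, real_inner_smul_left, inner_add_left, real_inner_smul_left,
      real_inner_smul_left, hee, inner_rejection_left he, inner_eq_cos_angle he hu]
    ring
  have hrej : rejection (e1 s) (u + t • rayDir s δ u) = (1 + t * μ) • rejection (e1 s) u := by
    rw [rejection, hinner, hdir, rejection, inner_eq_cos_angle he hu]
    module
  refine ⟨t, 1 + t * μ, ht, by positivity, hinner, ?_, hrej⟩
  rw [hrej, norm_smul, Real.norm_eq_abs, abs_of_pos (by positivity), norm_rejection he hu]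
  linear_combination t * hμsin

end Rays

lemma eq_of_mem_ray_of_mem_ray {s : ℕ} {δ : ℝ} (hδ0 : 0 < δ) (hδ : δ < π / 4)
    {u v z : EuclideanSpace ℝ (Fin s)} (hu : ‖u‖ = 1) (hv : ‖v‖ = 1)
    (hzu : z ∈ ray s δ u) (hzv : z ∈ ray s δ v) : u = v := by
  have hs : 0 < s := Nat.pos_of_ne_zero fun h => by subst h; simp [Subsingleton.elim u 0] at hu
  have hδ' : δ < π / 2 := by linarith [pi_pos]
  have he := norm_e1 hs
  obtain ⟨t, c, ht, hc, hu₁, hu₂, hu₃⟩ := exists_coords_of_mem_ray hs hδ0.le hδ' hu hzu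
  obtain ⟨r, d, hr, hd, hv₁, hv₂, hv₃⟩ := exists_coords_of_mem_ray hs hδ0.le hδ' hv hzv
  have hα : angle u (e1 s) ∈ Set.Icc 0 π := ⟨angle_nonneg _ _, angle_le_pi _ _⟩
  have hβ : angle v (e1 s) ∈ Set.Icc 0 π := ⟨angle_nonneg _ _, angle_le_pi _ _⟩
  rcases lt_trichotomy (angle u (e1 s)) (angle v (e1 s)) with h | h | h
  · exact (bendAngle_rays_disjoint hδ0.le hδ hα hβ h ht hr (hu₁.symm.trans hv₁)
      (hu₂.symm.trans hv₂)).elim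
  · refine eq_of_rejection_sameRay ?_ ?_ (.inr (.inr ⟨c, d, hc, hd, hu₃.symm.trans hv₃⟩))
    · rw [inner_eq_cos_angle he hu, inner_eq_cos_angle he hv, h]
    · rw [norm_rejection he hu, norm_rejection he hv, h]
  · exact (bendAngle_rays_disjoint hδ0.le hδ hβ hα h hr ht (hv₁.symm.trans hu₁)
      (hv₂.symm.trans hu₂)).elim

lemma one_le_harm {p : ℕ} (hp : 1 ≤ p) : 1 ≤ harm p :=
  calc (1 : ℝ) = 1 / ((0 : ℕ) + 1) := by norm_num
    _ ≤ harm p := Finset.single_le_sum (f := fun k : ℕ => (1 : ℝ) / (k + 1))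
        (fun _ _ => by positivity) (Finset.mem_range.mpr hp)

lemma setDist_le_dist {E : Type*} [MetricSpace E] {A B : Set E} {a b : E}
    (ha : a ∈ A) (hb : b ∈ B) : setDist A B ≤ dist a b :=
  csInf_le ⟨0, by rintro _ ⟨a', -, b', -, rfl⟩; exact dist_nonneg⟩ ⟨a, ha, b, hb, rfl⟩

lemma le_deltaPhi {X : Type*} [MetricSpace X] {m : X} {φ : X → X → ℝ} {x y : X} {c : ℝ}
    (hd : c ≤ dist x y) (hφ : c ≤ φ x y) : c ≤ deltaPhi m φ x y := by
  have : 0 ≤ 1 / (1 + dist m x) := by positivity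
  have : 0 ≤ 1 / (1 + dist m y) := by positivity
  exact le_min hd (by linarith)

section Psi

variable {s : ℕ} {δ : ℝ}

lemma psiF_of_norm_lt_one {x y : EuclideanSpace ℝ (Fin s)} (h : ‖x‖ < 1 ∨ ‖y‖ < 1) :
    psiF s δ x y = ‖x - y‖ := by
  have hharm : ∀ {p : ℕ} {z : EuclideanSpace ℝ (Fin s)}, 1 ≤ p → ‖z‖ = harm p → 1 ≤ ‖z‖ :=
    fun hp hz => hz ▸ one_le_harm hp
  rw [psiF, if_neg, dif_neg]
  · rintro ⟨⟨p, hp, hx, hy⟩, -⟩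
    rcases h with h | h
    · exact (hharm hp hx).not_gt h
    · exact (hharm hp hy).not_gt h
  · rintro ⟨-, -, -, -, p, q, hp, hq, hx, hy⟩
    rcases h with h | h
    · exact (hharm hp hx).not_gt h
    · exact (hharm hq hy).not_gt h

lemma setDist_ray_le_psiF (hδ0 : 0 < δ) (hδ : δ < π / 4) {x y x' y' : EuclideanSpace ℝ (Fin s)}
    (hx' : ‖x'‖ = 1) (hy' : ‖y'‖ = 1) (hx : x ∈ ray s δ x') (hy : y ∈ ray s δ y') :
    setDist (ray s δ x') (ray s δ y') ≤ psiF s δ x y := by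
  unfold psiF
  split_ifs with hcommon hsphere
  · obtain ⟨w, hw, hxw, hyw, -⟩ := hcommon
    rw [eq_of_mem_ray_of_mem_ray hδ0 hδ hx' hw hx hxw,
      eq_of_mem_ray_of_mem_ray hδ0 hδ hy' hw hy hyw]
    simpa using setDist_le_dist (mem_ray_self (δ := δ) w) (mem_ray_self w)
  · obtain ⟨hx'', hxx''⟩ := hsphere.2.1.choose_spec
    obtain ⟨hy'', hyy''⟩ := hsphere.2.2.choose_spec
    rw [← dist_eq_norm, ← eq_of_mem_ray_of_mem_ray hδ0 hδ hx' hx'' hx hxx'',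
      ← eq_of_mem_ray_of_mem_ray hδ0 hδ hy' hy'' hy hyy'']
    exact setDist_le_dist (mem_ray_self x') (mem_ray_self y')
  · rw [← dist_eq_norm]
    exact setDist_le_dist hx hy

end Psi

theorem stmt18_general (s : ℕ) (δ : ℝ) (hδ0 : 0 < δ) (hδ : δ < Real.pi / 4)
    (x y x' y' : EuclideanSpace ℝ (Fin s))
    (hx' : ‖x'‖ = 1) (hy' : ‖y'‖ = 1)
    (hxray : x ∈ ray s δ x') (hyray : y ∈ ray s δ y')
    (m : ℕ) (hm : 1 ≤ m) (f : ℕ → EuclideanSpace ℝ (Fin s))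
    (h0 : f 0 = x) (hfm : f m = y)
    (hmid : ∀ i, 1 ≤ i → i ≤ m - 1 → ‖f i‖ < 1) :
    ∑ i ∈ Finset.range m,
        deltaPhi (0 : EuclideanSpace ℝ (Fin s)) (psiF s δ) (f i) (f (i + 1))
      ≥ setDist (ray s δ x') (ray s δ y') := by
  have hxy : setDist (ray s δ x') (ray s δ y') ≤ dist x y := setDist_le_dist hxray hyray
  obtain rfl | hm := hm.eq_or_lt
  · rw [Finset.sum_range_one, h0, hfm]
    exact le_deltaPhi hxy (setDist_ray_le_psiF hδ0 hδ hx' hy' hxray hyray)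
  have hlink : ∀ i ∈ Finset.range m,
      dist (f i) (f (i + 1)) ≤ deltaPhi 0 (psiF s δ) (f i) (f (i + 1)) := by
    intro i hi
    have hinside : ‖f i‖ < 1 ∨ ‖f (i + 1)‖ < 1 := by
      rw [Finset.mem_range] at hi
      rcases i.eq_zero_or_pos with rfl | hi0
      · exact .inr (hmid 1 le_rfl (by omega))
      · exact .inl (hmid i hi0 (by omega))
    exact le_deltaPhi le_rfl (psiF_of_norm_lt_one hinside ▸ (dist_eq_norm _ _).le)
  calc setDist (ray s δ x') (ray s δ y') ≤ dist (f 0) (f m) := h0 ▸ hfm ▸ hxy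
    _ ≤ ∑ i ∈ Finset.range m, dist (f i) (f (i + 1)) := dist_le_range_sum_dist f m
    _ ≤ _ := Finset.sum_le_sum hlink

/-- Chains from x to y (‖x‖, ‖y‖ ≥ 1, x on ray L_{x'}, y on ray L_{y'}) passing
only through the open unit ball have δ^ψ-length at least d_E(L_{x'}, L_{y'}). -/
theorem stmt18 (s : ℕ) (hs : 2 ≤ s) (δ : ℝ) (hδ0 : 0 < δ) (hδ : δ < Real.pi / 4)
    (x y x' y' : EuclideanSpace ℝ (Fin s))
    (hx : 1 ≤ ‖x‖) (hy : 1 ≤ ‖y‖) (hx' : ‖x'‖ = 1) (hy' : ‖y'‖ = 1)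
    (hxray : x ∈ ray s δ x') (hyray : y ∈ ray s δ y')
    (m : ℕ) (hm : 1 ≤ m) (f : ℕ → EuclideanSpace ℝ (Fin s))
    (h0 : f 0 = x) (hfm : f m = y)
    (hmid : ∀ i, 1 ≤ i → i ≤ m - 1 → ‖f i‖ < 1) :
    ∑ i ∈ Finset.range m,
        deltaPhi (0 : EuclideanSpace ℝ (Fin s)) (psiF s δ) (f i) (f (i + 1))
      ≥ setDist (ray s δ x') (ray s δ y') :=
  stmt18_general s δ hδ0 hδ x y x' y' hx' hy' hxray hyray m hm f h0 hfm hmid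
end
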